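/- Under the inversive-plane setup below, for each i ∈ {4,5} and each j ∈ {2,3}: if x ∈ X_i and y, y' ∈ Y_j, then (y'/y)·x ∈ X_i. Similarly, for each j ∈ {2,3} and each i ∈ {4,5}: if y ∈ Y_j and x, x' ∈ X_i, then (x'/x)·y ∈ Y_j. -/

import Mathlib

open OnePoint

/-- A generalized circle in the inversive plane `ℝ² ∪ {∞}` (modeled as `OnePoint ℂ`):
either a Euclidean circle, or an affine line together with the point at infinity. -/
def IsGenCircle (S : Set (OnePoint ℂ)) : Prop :=
  (∃ c : ℂ, ∃ r : ℝ, 0 < r ∧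
      S = (fun z : ℂ => (z : OnePoint ℂ)) '' {z : ℂ | ‖z - c‖ = r}) ∨
  (∃ z₀ e : ℂ, e ≠ 0 ∧
      S = (fun z : ℂ => (z : OnePoint ℂ)) '' {z : ℂ | ∃ t : ℝ, z = z₀ + (t : ℂ) * e} ∪ {∞})

/-- The signed norm on `ℝ² ≅ ℂ`. -/
noncomputable def signedNorm (z : ℂ) : ℝ :=
  if 0 < z.im ∨ (z.im = 0 ∧ 0 ≤ z.re) then ‖z‖ else -‖z‖

/-- The set of signed norms of points of the `X`-axis having color `i`. -/
noncomputable def xAxisColorSet (Γ : OnePoint ℂ → ℕ) (i : ℕ) : Set ℝ :=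
  signedNorm '' {z : ℂ | z.im = 0 ∧ Γ (z : OnePoint ℂ) = i}

/-- The set of signed norms of points of the line through the origin with direction `d`
having color `j`. -/
noncomputable def lineColorSet (Γ : OnePoint ℂ → ℕ) (d : ℂ) (j : ℕ) : Set ℝ :=
  signedNorm '' {z : ℂ | (∃ t : ℝ, z = (t : ℂ) * d) ∧ Γ (z : OnePoint ℂ) = j}

/-!
Points `a e, b e` on one line through the origin and `t d, r d` on another are concyclic as
soon as `a b |e|² = t r |d|²` (equal powers of the origin). Let `x` have colour `i` on the
`X`-axis, `y, y'` colour `j` on `ℓ`, and pick `s d` on `ℓ` of the other colour `j'` of `{2, 3}`.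
The circle through `x, y, s d` meets the `X`-axis again in a point `x₁`; its four points would
carry four colours unless `x₁` has colour `i`. The circle through `x₁, y', s d` then returns
to the `X`-axis at `(y'/y) x`, which again has colour `i`. Exchanging the two lines gives the
second statement.
-/
lemma signedNorm_neg (z : ℂ) : signedNorm (-z) = -signedNorm z := by
  simp only [signedNorm, Complex.neg_im, Complex.neg_re, norm_neg]
  have hz : z = 0 ↔ z.re = 0 ∧ z.im = 0 := Complex.ext_iff
  split_ifs <;> grind [norm_eq_zero]

lemma signedNorm_ofReal_mul_of_pos {t : ℝ} (ht : 0 < t) (z : ℂ) :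
    signedNorm ((t : ℂ) * z) = t * signedNorm z := by
  simp only [signedNorm, Complex.re_ofReal_mul, Complex.im_ofReal_mul,
    mul_pos_iff_of_pos_left ht, mul_eq_zero, ht.ne', false_or, mul_nonneg_iff_of_pos_left ht,
    norm_mul, Complex.norm_real, Real.norm_of_nonneg ht.le]
  split_ifs <;> ring

lemma signedNorm_ofReal_mul (t : ℝ) (z : ℂ) : signedNorm ((t : ℂ) * z) = t * signedNorm z := by
  rcases lt_trichotomy t 0 with ht | rfl | ht
  · have := signedNorm_ofReal_mul_of_pos (neg_pos.2 ht) (-z)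
    rw [Complex.ofReal_neg, neg_mul_neg, signedNorm_neg] at this
    linarith
  · simp [signedNorm]
  · exact signedNorm_ofReal_mul_of_pos ht z

lemma signedNorm_ne_zero {z : ℂ} (hz : z ≠ 0) : signedNorm z ≠ 0 := by
  unfold signedNorm
  split_ifs <;> simp [hz]

lemma mem_lineColorSet_iff {Γ : OnePoint ℂ → ℕ} {d : ℂ} {j : ℕ} {y : ℝ} :
    y ∈ lineColorSet Γ d j ↔ ∃ t : ℝ, Γ (((t : ℂ) * d : ℂ) : OnePoint ℂ) = j ∧
      t * signedNorm d = y := by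
  constructor
  · rintro ⟨_, ⟨⟨t, rfl⟩, ht⟩, rfl⟩
    exact ⟨t, ht, (signedNorm_ofReal_mul t d).symm⟩
  · rintro ⟨t, ht, rfl⟩
    exact ⟨_, ⟨⟨t, rfl⟩, ht⟩, signedNorm_ofReal_mul t d⟩

lemma im_eq_zero_iff_exists_ofReal_mul_one {z : ℂ} : z.im = 0 ↔ ∃ t : ℝ, z = (t : ℂ) * 1 := by
  refine ⟨fun h => ⟨z.re, by simp [Complex.ext_iff, h]⟩, ?_⟩
  rintro ⟨t, rfl⟩
  simp

lemma xAxisColorSet_eq_lineColorSet_one (Γ : OnePoint ℂ → ℕ) (i : ℕ) :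
    xAxisColorSet Γ i = lineColorSet Γ 1 i := by
  simp only [xAxisColorSet, lineColorSet, im_eq_zero_iff_exists_ofReal_mul_one]

def originLine (d : ℂ) : Set (OnePoint ℂ) :=
  (fun z : ℂ => (z : OnePoint ℂ)) '' {z : ℂ | ∃ t : ℝ, z = (t : ℂ) * d} ∪ {∞}

lemma ofReal_mul_mem_originLine (t : ℝ) (d : ℂ) :
    (((t : ℂ) * d : ℂ) : OnePoint ℂ) ∈ originLine d :=
  Or.inl ⟨_, ⟨t, rfl⟩, rfl⟩

lemma infty_mem_originLine (d : ℂ) : ∞ ∈ originLine d := Or.inr rfl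

lemma ne_zero_of_apply_notMem_image_originLine {C : Type*} {Γ : OnePoint ℂ → C} {e d : ℂ}
    {t : ℝ} (ht : Γ (((t : ℂ) * d : ℂ) : OnePoint ℂ) ∉ Γ '' originLine e) : t ≠ 0 := by
  rintro rfl
  exact ht ⟨_, ofReal_mul_mem_originLine 0 e, by simp⟩

lemma exists_re_mul_add_im_mul_eq {e d : ℂ} (hed : e.re * d.im ≠ e.im * d.re) (α β : ℝ) :
    ∃ c : ℂ, c.re * e.re + c.im * e.im = α ∧ c.re * d.re + c.im * d.im = β := by
  have hΔ : e.re * d.im - e.im * d.re ≠ 0 := sub_ne_zero.2 hed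
  refine ⟨⟨(α * d.im - β * e.im) / (e.re * d.im - e.im * d.re),
    (β * e.re - α * d.re) / (e.re * d.im - e.im * d.re)⟩, ?_, ?_⟩ <;>
  · rw [div_mul_eq_mul_div, div_mul_eq_mul_div, ← add_div, div_eq_iff hΔ]
    ring

lemma normSq_ofReal_mul_sub {u v : ℝ} {f c : ℂ}
    (hc : c.re * f.re + c.im * f.im = (u + v) * Complex.normSq f / 2) :
    Complex.normSq ((u : ℂ) * f - c) = Complex.normSq c - u * v * Complex.normSq f := by
  simp only [Complex.normSq_apply, Complex.sub_re, Complex.sub_im, Complex.re_ofReal_mul,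
    Complex.im_ofReal_mul] at hc ⊢
  linear_combination (-2 * u) * hc

lemma exists_isGenCircle_of_mul_normSq_eq {e d : ℂ} (hed : e.re * d.im ≠ e.im * d.re)
    {a b t r : ℝ} (ht : t ≠ 0) (hK : a * b * Complex.normSq e = t * r * Complex.normSq d) :
    ∃ S, IsGenCircle S ∧ (((a : ℂ) * e : ℂ) : OnePoint ℂ) ∈ S ∧
      (((b : ℂ) * e : ℂ) : OnePoint ℂ) ∈ S ∧ (((t : ℂ) * d : ℂ) : OnePoint ℂ) ∈ S ∧
      (((r : ℂ) * d : ℂ) : OnePoint ℂ) ∈ S := by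
  -- The centre projects onto `ℝ e` and `ℝ d` at the chord midpoints; then each of the four
  -- points `w` has `|w - c|² = |c|² - a b |e|²`, by `hK`.
  obtain ⟨c, hce, hcd⟩ := exists_re_mul_add_im_mul_eq hed
    ((a + b) * Complex.normSq e / 2) ((t + r) * Complex.normSq d / 2)
  have hsq_a := normSq_ofReal_mul_sub hce
  have hsq_b := normSq_ofReal_mul_sub (hce.trans (by ring) : _ = (b + a) * _ / 2)
  have hsq_t := normSq_ofReal_mul_sub hcd
  have hsq_r := normSq_ofReal_mul_sub (hcd.trans (by ring) : _ = (r + t) * _ / 2)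
  have hnorm : ∀ {w : ℂ}, Complex.normSq (w - c) = Complex.normSq ((t : ℂ) * d - c) →
      ‖w - c‖ = ‖(t : ℂ) * d - c‖ := by
    intro w hw
    rw [Complex.norm_def, Complex.norm_def, hw]
  have htd : (t : ℂ) * d - c ≠ 0 := by
    intro htc
    have hac : Complex.normSq ((a : ℂ) * e - c) = 0 := by
      rw [hsq_a, hK, ← hsq_t, htc, map_zero]
    rw [Complex.normSq_eq_zero, sub_eq_zero, ← sub_eq_zero.1 htc] at hac
    have hre := congrArg Complex.re hac
    have him := congrArg Complex.im hac
    simp only [Complex.re_ofReal_mul, Complex.im_ofReal_mul] at hre him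
    exact hed (mul_left_cancel₀ ht (by linear_combination e.im * hre - e.re * him))
  refine ⟨_, Or.inl ⟨c, _, norm_pos_iff.2 htd, rfl⟩, ⟨_, hnorm ?_, rfl⟩, ⟨_, hnorm ?_, rfl⟩,
    ⟨_, rfl, rfl⟩, ⟨_, hnorm ?_, rfl⟩⟩
  · rw [hsq_a, hsq_t, hK]
  · rw [hsq_b, hsq_t, ← hK]; ring
  · rw [hsq_r, hsq_t]; ring

section Coloring

variable {C : Type*} {Γ : OnePoint ℂ → C} (hfin : (Set.range Γ).Finite)
  (hcircle : ∀ S : Set (OnePoint ℂ), IsGenCircle S → (Γ '' S).ncard ≤ 3)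
include hfin hcircle

lemma apply_eq_of_mem_isGenCircle {S : Set (OnePoint ℂ)} (hS : IsGenCircle S)
    {p₁ p₂ p₃ p₄ : OnePoint ℂ} (h₁ : p₁ ∈ S) (h₂ : p₂ ∈ S) (h₃ : p₃ ∈ S) (h₄ : p₄ ∈ S)
    (h₁₂ : Γ p₁ ≠ Γ p₂) (h₁₃ : Γ p₁ ≠ Γ p₃) (h₂₃ : Γ p₂ ≠ Γ p₃)
    (h₄₁ : Γ p₄ ≠ Γ p₁) (h₄₂ : Γ p₄ ≠ Γ p₂) : Γ p₄ = Γ p₃ := by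
  by_contra h₄₃
  have hsub : ({Γ p₁, Γ p₂, Γ p₃, Γ p₄} : Set C) ⊆ Γ '' S := by
    simp only [Set.insert_subset_iff, Set.singleton_subset_iff]
    exact ⟨⟨_, h₁, rfl⟩, ⟨_, h₂, rfl⟩, ⟨_, h₃, rfl⟩, ⟨_, h₄, rfl⟩⟩
  have hcard : ({Γ p₁, Γ p₂, Γ p₃, Γ p₄} : Set C).ncard = 4 := by
    rw [Set.ncard_insert_of_notMem (by simp [h₁₂, h₁₃, h₄₁.symm]),
      Set.ncard_insert_of_notMem (by simp [h₂₃, h₄₂.symm]),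
      Set.ncard_pair (Ne.symm h₄₃)]
  have := Set.ncard_le_ncard hsub (hfin.subset (Set.image_subset_range Γ S))
  have := hcircle S hS
  omega

variable {e d : ℂ} (hed : e.re * d.im ≠ e.im * d.re)
include hed

lemma apply_ofReal_mul_eq_of_mul_normSq_eq {a b t s : ℝ}
    (hK : a * b * Complex.normSq e = t * s * Complex.normSq d)
    (hts : Γ (((t : ℂ) * d : ℂ) : OnePoint ℂ) ≠ Γ (((s : ℂ) * d : ℂ) : OnePoint ℂ))
    (ht : Γ (((t : ℂ) * d : ℂ) : OnePoint ℂ) ∉ Γ '' originLine e)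
    (hs : Γ (((s : ℂ) * d : ℂ) : OnePoint ℂ) ∉ Γ '' originLine e) :
    Γ (((b : ℂ) * e : ℂ) : OnePoint ℂ) = Γ (((a : ℂ) * e : ℂ) : OnePoint ℂ) := by
  have hmem : ∀ u : ℝ, Γ (((u : ℂ) * e : ℂ) : OnePoint ℂ) ∈ Γ '' originLine e :=
    fun u => ⟨_, ofReal_mul_mem_originLine u e, rfl⟩
  obtain ⟨S, hS, ha, hb, ht', hs'⟩ :=
    exists_isGenCircle_of_mul_normSq_eq hed (ne_zero_of_apply_notMem_image_originLine ht) hK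
  exact apply_eq_of_mem_isGenCircle hfin hcircle hS ht' hs' ha hb hts
    (fun h => ht (h ▸ hmem a)) (fun h => hs (h ▸ hmem a))
    (fun h => ht (h ▸ hmem b)) (fun h => hs (h ▸ hmem b))

lemma apply_ratio_mul_eq {t t' s : ℝ}
    (ht' : Γ (((t' : ℂ) * d : ℂ) : OnePoint ℂ) = Γ (((t : ℂ) * d : ℂ) : OnePoint ℂ))
    (hts : Γ (((t : ℂ) * d : ℂ) : OnePoint ℂ) ≠ Γ (((s : ℂ) * d : ℂ) : OnePoint ℂ))
    (ht : Γ (((t : ℂ) * d : ℂ) : OnePoint ℂ) ∉ Γ '' originLine e)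
    (hs : Γ (((s : ℂ) * d : ℂ) : OnePoint ℂ) ∉ Γ '' originLine e) (a : ℝ) :
    Γ ((((t' / t * a : ℝ) : ℂ) * e : ℂ) : OnePoint ℂ) = Γ (((a : ℂ) * e : ℂ) : OnePoint ℂ) := by
  rcases eq_or_ne a 0 with rfl | ha
  · simp
  have ht0 := ne_zero_of_apply_notMem_image_originLine ht
  have he : Complex.normSq e ≠ 0 := fun h => hed (by simp [Complex.normSq_eq_zero.1 h])
  set b := t * s * Complex.normSq d / (a * Complex.normSq e) with hb
  have hab : a * b * Complex.normSq e = t * s * Complex.normSq d := by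
    rw [hb]
    field_simp
  have hbc : b * (t' / t * a) * Complex.normSq e = t' * s * Complex.normSq d := by
    rw [hb]
    field_simp
  rw [apply_ofReal_mul_eq_of_mul_normSq_eq hfin hcircle hed hbc (ht' ▸ hts) (ht' ▸ ht) hs,
    apply_ofReal_mul_eq_of_mul_normSq_eq hfin hcircle hed hab hts ht hs]

end Coloring

lemma ratio_mul_mem_lineColorSet {Γ : OnePoint ℂ → ℕ} (hfin : (Set.range Γ).Finite)
    (hcircle : ∀ S : Set (OnePoint ℂ), IsGenCircle S → (Γ '' S).ncard ≤ 3)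
    {e d : ℂ} (hed : e.re * d.im ≠ e.im * d.re) {i j c : ℕ} (hj : j ∉ Γ '' originLine e)
    (hcd : c ∈ Γ '' originLine d) (hce : c ∉ Γ '' originLine e) (hcj : c ≠ j)
    {x y y' : ℝ} (hx : x ∈ lineColorSet Γ e i) (hy : y ∈ lineColorSet Γ d j)
    (hy' : y' ∈ lineColorSet Γ d j) : y' / y * x ∈ lineColorSet Γ e i := by
  obtain ⟨a, rfl, rfl⟩ := mem_lineColorSet_iff.1 hx
  obtain ⟨t, htj, rfl⟩ := mem_lineColorSet_iff.1 hy
  obtain ⟨t', ht'j, rfl⟩ := mem_lineColorSet_iff.1 hy'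
  obtain ⟨s, rfl⟩ : ∃ s : ℝ, Γ (((s : ℂ) * d : ℂ) : OnePoint ℂ) = c := by
    obtain ⟨p, ⟨_, ⟨s, rfl⟩, rfl⟩ | rfl, rfl⟩ := hcd
    · exact ⟨s, rfl⟩
    · exact absurd ⟨_, infty_mem_originLine e, rfl⟩ hce
  subst htj
  have hd : d ≠ 0 := by
    rintro rfl
    simp at hed
  have ht0 := ne_zero_of_apply_notMem_image_originLine hj
  refine mem_lineColorSet_iff.2 ⟨t' / t * a, ?_, ?_⟩
  · exact apply_ratio_mul_eq hfin hcircle hed ht'j hcj.symm hj hce a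
  · field_simp [signedNorm_ne_zero hd]

theorem function_m_claim_general
    (Γ : OnePoint ℂ → ℕ)
    (hrange : Set.range Γ = {1, 2, 3, 4, 5})
    (h3 : ∀ S : Set (OnePoint ℂ), IsGenCircle S → (Γ '' S).ncard ≤ 3)
    (hX : Γ '' ((fun z : ℂ => (z : OnePoint ℂ)) '' {z : ℂ | z.im = 0} ∪ {∞}) = {1, 4, 5})
    (d : ℂ) (hdim : d.im ≠ 0)
    (hL : Γ '' ((fun z : ℂ => (z : OnePoint ℂ)) '' {z : ℂ | ∃ t : ℝ, z = (t : ℂ) * d} ∪ {∞}) =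
      {1, 2, 3}) :
    (∀ i ∈ ({4, 5} : Set ℕ), ∀ j ∈ ({2, 3} : Set ℕ),
      ∀ x ∈ xAxisColorSet Γ i, ∀ y ∈ lineColorSet Γ d j, ∀ y' ∈ lineColorSet Γ d j,
        (y' / y) * x ∈ xAxisColorSet Γ i) ∧
    (∀ j ∈ ({2, 3} : Set ℕ), ∀ i ∈ ({4, 5} : Set ℕ),
      ∀ y ∈ lineColorSet Γ d j, ∀ x ∈ xAxisColorSet Γ i, ∀ x' ∈ xAxisColorSet Γ i,
        (x' / x) * y ∈ lineColorSet Γ d j) := by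
  have hfin : (Set.range Γ).Finite := hrange ▸ Set.toFinite _
  have hX : Γ '' originLine 1 = {1, 4, 5} := by
    simpa only [originLine, im_eq_zero_iff_exists_ofReal_mul_one] using hX
  have hL : Γ '' originLine d = {1, 2, 3} := hL
  have hed : (1 : ℂ).re * d.im ≠ (1 : ℂ).im * d.re := by simpa using hdim
  have hde : d.re * (1 : ℂ).im ≠ d.im * (1 : ℂ).re := by simpa [eq_comm] using hdim
  simp only [xAxisColorSet_eq_lineColorSet_one]
  refine ⟨fun i _ j hj x hx y hy y' hy' => ?_, fun j _ i hi y hy x hx x' hx' => ?_⟩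
  · rcases hj with rfl | rfl
    · exact ratio_mul_mem_lineColorSet hfin h3 hed (c := 3) (by simp [hX]) (by simp [hL])
        (by simp [hX]) (by decide) hx hy hy'
    · exact ratio_mul_mem_lineColorSet hfin h3 hed (c := 2) (by simp [hX]) (by simp [hL])
        (by simp [hX]) (by decide) hx hy hy'
  · rcases hi with rfl | rfl
    · exact ratio_mul_mem_lineColorSet hfin h3 hde (c := 5) (by simp [hL]) (by simp [hX])
        (by simp [hL]) (by decide) hy hx hx'
    · exact ratio_mul_mem_lineColorSet hfin h3 hde (c := 4) (by simp [hL]) (by simp [hX])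
        (by simp [hL]) (by decide) hy hx hx'

/-- Claim 3 of the `n = 2` proof: for `i ∈ {4,5}`, `j ∈ {2,3}`, `x ∈ Xᵢ` and `y, y' ∈ Y_j`,
we have `(y'/y)·x ∈ Xᵢ`; and symmetrically `(x'/x)·y ∈ Y_j` for `x, x' ∈ Xᵢ`, `y ∈ Y_j`. -/
theorem function_m_claim
    (Γ : OnePoint ℂ → ℕ)
    (hrange : Set.range Γ = {1, 2, 3, 4, 5})
    (h3 : ∀ S : Set (OnePoint ℂ), IsGenCircle S → (Γ '' S).ncard ≤ 3)
    (h0 : Γ ((0 : ℂ) : OnePoint ℂ) = 1) (hinf : Γ ∞ = 1)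
    (h1 : Γ ((1 : ℂ) : OnePoint ℂ) = 5)
    (hneg : ∃ x : ℝ, x < 0 ∧ Γ (((x : ℂ)) : OnePoint ℂ) = 4)
    (hX : Γ '' ((fun z : ℂ => (z : OnePoint ℂ)) '' {z : ℂ | z.im = 0} ∪ {∞}) = {1, 4, 5})
    (d : ℂ) (hd : d ≠ 0) (hdim : d.im ≠ 0)
    (hL : Γ '' ((fun z : ℂ => (z : OnePoint ℂ)) '' {z : ℂ | ∃ t : ℝ, z = (t : ℂ) * d} ∪ {∞}) =
      {1, 2, 3}) :
    (∀ i ∈ ({4, 5} : Set ℕ), ∀ j ∈ ({2, 3} : Set ℕ),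
      ∀ x ∈ xAxisColorSet Γ i, ∀ y ∈ lineColorSet Γ d j, ∀ y' ∈ lineColorSet Γ d j,
        (y' / y) * x ∈ xAxisColorSet Γ i) ∧
    (∀ j ∈ ({2, 3} : Set ℕ), ∀ i ∈ ({4, 5} : Set ℕ),
      ∀ y ∈ lineColorSet Γ d j, ∀ x ∈ xAxisColorSet Γ i, ∀ x' ∈ xAxisColorSet Γ i,
        (x' / x) * y ∈ lineColorSet Γ d j) :=
  function_m_claim_general Γ hrange h3 hX d hdim hL
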